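/- arXiv:math/0503528 — 6 statements merged into one kernel-verified Lean document; each statement's English description precedes it below -/
import Mathlib

section
/- Let I ⊆ ℂ[x₀,…,x_{2n−1}] be an ideal and A a symmetric complex 2n×2n matrix whose quadratic polynomial q_A(x) = xᵀAx satisfies [f, q_A] ∈ I for every f ∈ I (in particular this holds if q_A ∈ I and I is closed under the Poisson bracket). Then the one-parameter subgroup generated by 2JA preserves the zero locus of I: for every x ∈ Z(I) and every t ∈ ℂ, exp(t·2JA)·x ∈ Z(I). -/
open MvPolynomial Matrix

/-- The Poisson bracket on `ℂ[x₀,…,x_{2n−1}]` associated to the standard symplectic form: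
`[f,g] = Σ_{i=0}^{n−1} (∂f/∂x_i · ∂g/∂x_{n+i} − ∂f/∂x_{n+i} · ∂g/∂x_i)`. -/
noncomputable def poissonBracket (n : ℕ) (f g : MvPolynomial (Fin (2 * n)) ℂ) :
    MvPolynomial (Fin (2 * n)) ℂ :=
  ∑ i : Fin n,
    (pderiv (⟨i.1, by have := i.isLt; omega⟩ : Fin (2 * n)) f *
        pderiv (⟨n + i.1, by have := i.isLt; omega⟩ : Fin (2 * n)) g -
      pderiv (⟨n + i.1, by have := i.isLt; omega⟩ : Fin (2 * n)) f *
        pderiv (⟨i.1, by have := i.isLt; omega⟩ : Fin (2 * n)) g)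

/-- The standard symplectic matrix `J = (0 Idₙ; −Idₙ 0)`. -/
def Jmat (n : ℕ) : Matrix (Fin (2 * n)) (Fin (2 * n)) ℂ :=
  fun i j => if i.1 + n = j.1 then 1 else if j.1 + n = i.1 then -1 else 0

/-- The quadratic polynomial `q_A(x) = xᵀAx` of a `2n×2n` matrix `A`. -/
noncomputable def quadPoly (n : ℕ) (A : Matrix (Fin (2 * n)) (Fin (2 * n)) ℂ) :
    MvPolynomial (Fin (2 * n)) ℂ :=
  ∑ i : Fin (2 * n), ∑ j : Fin (2 * n), C (A i j) * X i * X j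

/-! Along `γ(s) = exp(s • 2JA) x`, the chain rule gives `(f ∘ γ)' = [f, q_A] ∘ γ`, since
`2JA y = J ∇q_A(y)` is the Hamiltonian vector field of `q_A`. Iterating, the `k`-th derivative of
`f ∘ γ` is `D^k f ∘ γ` with `D = [·, q_A]`; for `f ∈ I` it vanishes at `s = 0` because `I` is
`D`-stable and `x ∈ Z(I)`. The entire function `f ∘ γ` then equals its Taylor series at `0`,
which is zero. -/

theorem MvPolynomial.hasDerivAt_eval_comp {𝕜 σ : Type*} [NontriviallyNormedField 𝕜] [Fintype σ]
    (f : MvPolynomial σ 𝕜) {γ : 𝕜 → σ → 𝕜} {γ' : σ → 𝕜} {s : 𝕜} (hγ : HasDerivAt γ γ' s) :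
    HasDerivAt (fun u => eval (γ u) f) (∑ i, eval (γ s) (pderiv i f) * γ' i) s := by
  classical
  induction f using MvPolynomial.induction_on with
  | C a => simpa using hasDerivAt_const s a
  | add p q hp hq =>
    simp only [map_add, add_mul, Finset.sum_add_distrib]
    exact hp.add hq
  | mul_X p i hp =>
    simp only [map_mul, eval_X]
    refine (hp.mul (hasDerivAt_pi.1 hγ i)).congr_deriv ?_
    simp only [Finset.sum_mul, Derivation.leibniz, pderiv_X, Pi.single_apply, smul_eq_mul, mul_ite,
      mul_one, mul_zero, map_add, apply_ite (eval (γ s)), map_zero, map_mul, eval_X, add_mul,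
      ite_mul, zero_mul, Finset.sum_add_distrib, Finset.sum_ite_eq, Finset.mem_univ, ↓reduceIte]
    rw [add_comm]
    exact congrArg _ (Finset.sum_congr rfl fun _ _ => by ring)

theorem eq_zero_of_hasDerivAt_of_mapsTo {R : Type*} {S : Set R} {D : R → R}
    (hD : Set.MapsTo D S S) {φ : R → ℂ → ℂ} (hφ : ∀ f s, HasDerivAt (φ f) (φ (D f) s) s)
    (h0 : ∀ f ∈ S, φ f 0 = 0) {f : R} (hf : f ∈ S) (z : ℂ) : φ f z = 0 := by
  have hiter : ∀ k g, iteratedDeriv k (φ g) = φ (D^[k] g) := by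
    intro k
    induction k with
    | zero => simp
    | succ k ih =>
      intro g
      rw [iteratedDeriv_succ', funext fun s => (hφ g s).deriv, ih, Function.iterate_succ_apply]
  have htaylor := Complex.hasSum_taylorSeries_of_entire (fun s => (hφ f s).differentiableAt) 0 z
  simp only [hiter, h0 _ (hD.iterate _ hf), smul_zero] at htaylor
  exact htaylor.unique hasSum_zero

theorem Matrix.hasDerivAt_exp_smul_mulVec {ι : Type*} [Fintype ι] [DecidableEq ι]
    (B : Matrix ι ι ℂ) (x : ι → ℂ) (s : ℂ) :
    HasDerivAt (fun u : ℂ => NormedSpace.exp (u • B) *ᵥ x)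
      (B *ᵥ (NormedSpace.exp (s • B) *ᵥ x)) s := by
  -- any norm inducing the product topology will do: `NormedSpace.exp` only sees the topology
  let _ : NormedRing (Matrix ι ι ℂ) := Matrix.linftyOpNormedRing
  let _ : NormedAlgebra ℂ (Matrix ι ι ℂ) := Matrix.linftyOpNormedAlgebra
  rw [mulVec_mulVec]
  exact (((mulVecBilin ℂ ℂ).flip x).toContinuousLinearMap.hasFDerivAt).comp_hasDerivAt s
    (hasDerivAt_exp_smul_const' B s)

theorem eval_pderiv_quadPoly {n : ℕ} (A : Matrix (Fin (2 * n)) (Fin (2 * n)) ℂ)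
    (y : Fin (2 * n) → ℂ) (k : Fin (2 * n)) :
    eval y (pderiv k (quadPoly n A)) = ((A + Aᵀ) *ᵥ y) k := by
  simp only [quadPoly, map_sum, Derivation.leibniz, pderiv_X, Pi.single_apply, smul_eq_mul,
    mul_ite, mul_one, mul_zero, derivation_C, add_zero, Finset.sum_add_distrib, Finset.sum_ite_eq',
    Finset.mem_univ, ↓reduceIte, Finset.sum_ite_irrel, Finset.sum_const_zero, map_add, map_mul,
    eval_C, eval_X, mulVec, dotProduct, Matrix.add_apply, transpose_apply]
  rw [add_comm, ← Finset.sum_add_distrib]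
  exact Finset.sum_congr rfl fun i _ => by ring

theorem Fin.sum_univ_two_mul {M : Type*} [AddCommMonoid M] {n : ℕ} (g : Fin (2 * n) → M) :
    ∑ j, g j = ∑ i : Fin n, (g ⟨i, by omega⟩ + g ⟨n + i, by omega⟩) := by
  rw [← (finCongr (two_mul n)).symm.sum_comp, Fin.sum_univ_add, ← Finset.sum_add_distrib]
  rfl

theorem Jmat_mulVec_apply_left {n : ℕ} (v : Fin (2 * n) → ℂ) (i : Fin n) :
    (Jmat n *ᵥ v) ⟨i, by omega⟩ = v ⟨n + i, by omega⟩ := by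
  rw [mulVec, dotProduct, Finset.sum_eq_single ⟨n + i, by omega⟩]
  · simp [Jmat, add_comm]
  · intro j _ hj
    have h₁ : (i : ℕ) + n ≠ j := fun h => hj (Fin.ext (by dsimp only; omega))
    have h₂ : (j : ℕ) + n ≠ i := by omega
    simp [Jmat, h₁, h₂]
  · simp

theorem Jmat_mulVec_apply_right {n : ℕ} (v : Fin (2 * n) → ℂ) (i : Fin n) :
    (Jmat n *ᵥ v) ⟨n + i, by omega⟩ = -v ⟨i, by omega⟩ := by
  rw [mulVec, dotProduct, Finset.sum_eq_single ⟨i, by omega⟩]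
  · simp [Jmat, add_comm, show n + (n + (i : ℕ)) ≠ i by omega]
  · intro j _ hj
    have h₁ : n + (i : ℕ) + n ≠ j := by omega
    have h₂ : (j : ℕ) + n ≠ n + i := fun h => hj (Fin.ext (by dsimp only; omega))
    simp [Jmat, h₁, h₂]
  · simp

theorem eval_poissonBracket {n : ℕ} (f g : MvPolynomial (Fin (2 * n)) ℂ) (y : Fin (2 * n) → ℂ) :
    eval y (poissonBracket n f g) =
      ∑ j, eval y (pderiv j f) * (Jmat n *ᵥ fun k => eval y (pderiv k g)) j := by
  rw [Fin.sum_univ_two_mul, poissonBracket, map_sum]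
  refine Finset.sum_congr rfl fun i _ => ?_
  rw [Jmat_mulVec_apply_left, Jmat_mulVec_apply_right]
  simp only [map_sub, map_mul]
  ring

/-- If `A` is symmetric and `[f, q_A] ∈ I` for all `f ∈ I`, then the one-parameter subgroup
`exp(t·2JA)` preserves the zero locus of `I`. -/
theorem exp_preserves_zeroLocus (n : ℕ) (I : Ideal (MvPolynomial (Fin (2 * n)) ℂ))
    (A : Matrix (Fin (2 * n)) (Fin (2 * n)) ℂ) (hA : A.IsSymm)
    (hbr : ∀ f ∈ I, poissonBracket n f (quadPoly n A) ∈ I) :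
    ∀ x : Fin (2 * n) → ℂ, (∀ f ∈ I, eval x f = 0) → ∀ t : ℂ, ∀ f ∈ I,
      eval ((NormedSpace.exp (t • ((2 : ℂ) • (Jmat n * A)))).mulVec x) f = 0 := by
  intro x hx t f hf
  set B := (2 : ℂ) • (Jmat n * A)
  have hgrad : ∀ y, Jmat n *ᵥ (fun k => eval y (pderiv k (quadPoly n A))) = B *ᵥ y := by
    intro y
    simp only [eval_pderiv_quadPoly, hA.eq, ← two_smul ℂ A]
    rw [mulVec_mulVec, Matrix.mul_smul]
  refine eq_zero_of_hasDerivAt_of_mapsTo (D := fun g => poissonBracket n g (quadPoly n A))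
    (φ := fun g s => eval (NormedSpace.exp (s • B) *ᵥ x) g) hbr (fun g s => ?_) (fun g hg => ?_)
    hf t
  · rw [eval_poissonBracket, hgrad]
    exact g.hasDerivAt_eval_comp (hasDerivAt_exp_smul_mulVec B x s)
  · simpa using hx g hg
end

section
/- Let I ⊆ ℂ[x₀,…,x_{2n−1}] be a radical homogeneous ideal with zero locus Z = Z(I). Assume: (a) for all x ∈ Z and all f, g ∈ I, ∇f(x)ᵀ J ∇g(x) = 0; and (b) there is a subset U ⊆ Z whose vanishing ideal equals I and such that for every x ∈ U the linear span of {∇f(x) : f ∈ I} has dimension n. Suppose q ∈ ℂ^{2n} is a nonzero vector such that Z is a cone with vertex along q, i.e. x + t·q ∈ Z for all x ∈ Z and all t ∈ ℂ. Then the linear polynomial w ↦ ω(w, q) = wᵀJq belongs to I; in particular Z is contained in the hyperplane {w ∈ ℂ^{2n} : ω(w,q) = 0}, so the corresponding projective variety is degenerate (contained in a hyperplane). -/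
open MvPolynomial Matrix

/-- The zero locus of an ideal of polynomials. -/
def zeroLocus (n : ℕ) (I : Ideal (MvPolynomial (Fin (2 * n)) ℂ)) : Set (Fin (2 * n) → ℂ) :=
  {x | ∀ f ∈ I, eval x f = 0}

/-- The gradient of a polynomial at a point. -/
noncomputable def gradAt (n : ℕ) (f : MvPolynomial (Fin (2 * n)) ℂ) (x : Fin (2 * n) → ℂ) :
    Fin (2 * n) → ℂ :=
  fun i => eval x (pderiv i f)

/-! At a point `x ∈ U` the gradients `N` of the polynomials of `I` form an isotropic subspace
of dimension `n`, hence a lagrangian one: `N` is its own symplectic orthogonal. Every gradient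
kills `q`, since the polynomials of `I` vanish on the lines `x + ℂ q`; as `J² = -1`, this makes
`J q` symplectically orthogonal to `N`, so `J q ∈ N`. By Euler's identity every gradient also
kills `x`, whence `ω(x, q) = x ⬝ J q = 0` on `U`, and the vanishing ideal of `U` is `I`. -/

namespace MvPolynomial

theorem derivative_aeval {R σ : Type*} [CommSemiring R] [Fintype σ] (γ : σ → Polynomial R)
    (f : MvPolynomial σ R) :
    Polynomial.derivative (aeval γ f) =
      ∑ i, aeval γ (pderiv i f) * Polynomial.derivative (γ i) := by
  classical
  induction f using MvPolynomial.induction_on with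
  | C a => simp
  | add p q hp hq => simp [hp, hq, add_mul, Finset.sum_add_distrib]
  | mul_X p i hp =>
    simp [hp, pderiv_X, Pi.single_apply, add_mul, Finset.sum_add_distrib, Finset.sum_mul,
      apply_ite (aeval γ), ite_mul, mul_right_comm _ (γ i), mul_comm (γ i), add_comm]

theorem sum_pderiv_mul_eq_zero_of_eval_add_smul {K σ : Type*} [Field K] [Infinite K] [Fintype σ]
    {f : MvPolynomial σ K} {x v : σ → K} (hf : ∀ t : K, eval (x + t • v) f = 0) :
    ∑ i, eval x (pderiv i f) * v i = 0 := by
  obtain ⟨γ, hγ⟩ : ∃ γ : σ → Polynomial K, ∀ i, γ i = .C (x i) + .X * .C (v i) :=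
    ⟨_, fun _ => rfl⟩
  have heval (t : K) (g : MvPolynomial σ K) : (aeval γ g).eval t = eval (x + t • v) g := by
    rw [← Polynomial.coe_aeval_eq_eval, comp_aeval_apply, aeval_eq_eval]
    congr
    funext i
    simp [hγ, mul_comm t]
  have hline : aeval γ f = 0 := Polynomial.funext fun t => by simp [heval, hf]
  simpa [derivative_aeval, Polynomial.eval_finsetSum, heval, hγ] using
    congrArg (fun p => (Polynomial.derivative p).eval 0) hline

theorem sum_X_mul_pderiv_mem_span {R σ : Type*} [CommSemiring R] [Fintype σ]
    {S : Set (MvPolynomial σ R)} (hS : ∀ g ∈ S, ∃ d, g.IsHomogeneous d) {f : MvPolynomial σ R}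
    (hf : f ∈ Ideal.span S) : ∑ i, X i * pderiv i f ∈ Ideal.span S := by
  induction hf using Submodule.span_induction with
  | mem g hg =>
    obtain ⟨d, hd⟩ := hS g hg
    rw [hd.sum_X_mul_pderiv, nsmul_eq_mul]
    exact Ideal.mul_mem_left _ _ (Ideal.subset_span hg)
  | zero => simp
  | add f g _ _ hf hg => simpa [mul_add, Finset.sum_add_distrib] using add_mem hf hg
  | smul a f hfS hf =>
    simp only [smul_eq_mul, Derivation.leibniz, mul_add, Finset.sum_add_distrib,
      mul_left_comm (X _), ← Finset.mul_sum]
    exact add_mem (Ideal.mul_mem_left _ a hf) (Ideal.mul_mem_right _ _ hfS)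

theorem eval_sum_C_mul_X {R σ : Type*} [CommSemiring R] [Fintype σ] (a x : σ → R) :
    eval x (∑ i, C (a i) * X i) = x ⬝ᵥ a := by
  simp [dotProduct, mul_comm]

end MvPolynomial

theorem LinearMap.BilinForm.orthogonal_eq_of_le_orthogonal {K V : Type*} [Field K]
    [AddCommGroup V] [Module K V] [FiniteDimensional K V] {B : LinearMap.BilinForm K V}
    (hB : B.Nondegenerate) {N : Submodule K V} (hN : N ≤ B.orthogonal N)
    (hdim : 2 * Module.finrank K N = Module.finrank K V) : B.orthogonal N = N :=
  (Submodule.eq_of_le_of_finrank_le hN (by rw [finrank_orthogonal hB]; omega)).symm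

theorem Matrix.dotProduct_mulVec_eq_zero_of_lagrangian {ι K : Type*} [Fintype ι]
    [DecidableEq ι] [Field K] {J : Matrix ι ι K} (hJ : J * J = -1) {N : Submodule K (ι → K)}
    (hiso : ∀ u ∈ N, ∀ w ∈ N, u ⬝ᵥ J *ᵥ w = 0) (hdim : 2 * Module.finrank K N = Fintype.card ι)
    {x q : ι → K} (hxN : ∀ u ∈ N, x ⬝ᵥ u = 0) (hqN : ∀ u ∈ N, u ⬝ᵥ q = 0) :
    x ⬝ᵥ J *ᵥ q = 0 := by
  have hB : J.toBilin'.Nondegenerate := LinearMap.BilinForm.nondegenerate_toBilin'_of_det_ne_zero'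
    J (det_ne_zero_of_right_inverse (B := -J) (by simp [hJ]))
  have hN : N ≤ J.toBilin'.orthogonal N := fun w hw =>
    LinearMap.BilinForm.mem_orthogonal_iff.2 fun u hu => by
      simpa [toBilin'_apply'] using hiso u hu w hw
  have hJq : J *ᵥ q ∈ J.toBilin'.orthogonal N :=
    LinearMap.BilinForm.mem_orthogonal_iff.2 fun u hu => by
      simp [toBilin'_apply', mulVec_mulVec, hJ, neg_mulVec, hqN u hu]
  rw [LinearMap.BilinForm.orthogonal_eq_of_le_orthogonal hB hN (by simpa using hdim)] at hJq
  exact hxN _ hJq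

theorem Jmat_mul_self (n : ℕ) : Jmat n * Jmat n = -1 := by
  ext i j
  have hi := i.isLt
  have hj := j.isLt
  let k : Fin (2 * n) := ⟨if (i : ℕ) < n then i + n else i - n, by split_ifs <;> omega⟩
  rw [Matrix.mul_apply, Fintype.sum_eq_single k]
  · simp only [Jmat, k, Matrix.neg_apply, Matrix.one_apply, Fin.ext_iff]
    split_ifs <;> first | (exfalso; omega) | norm_num
  · intro b hb
    have hb' : (b : ℕ) ≠ if (i : ℕ) < n then i + n else i - n := fun h => hb (Fin.ext h)
    have := b.isLt
    simp only [Jmat]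
    split_ifs at * <;> first | (exfalso; omega) | norm_num

noncomputable def gradAtₗ (n : ℕ) (x : Fin (2 * n) → ℂ) :
    MvPolynomial (Fin (2 * n)) ℂ →ₗ[ℂ] Fin (2 * n) → ℂ :=
  LinearMap.pi fun i => (aeval x).toLinearMap ∘ₗ (pderiv i).toLinearMap

theorem mem_span_gradAt_iff {n : ℕ} {I : Ideal (MvPolynomial (Fin (2 * n)) ℂ)}
    {x u : Fin (2 * n) → ℂ} :
    u ∈ Submodule.span ℂ {v | ∃ f ∈ I, v = gradAt n f x} ↔ ∃ f ∈ I, gradAt n f x = u := by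
  have hset : {v | ∃ f ∈ I, v = gradAt n f x} = (I.restrictScalars ℂ).map (gradAtₗ n x) := by
    ext v
    simp [gradAtₗ, gradAt, eq_comm, funext_iff]
  rw [hset, Submodule.span_eq, Submodule.mem_map]
  rfl

theorem legendrian_cone_is_degenerate_general (n : ℕ)
    (I : Ideal (MvPolynomial (Fin (2 * n)) ℂ))
    (hhom : ∃ S : Set (MvPolynomial (Fin (2 * n)) ℂ),
      (∀ f ∈ S, ∃ d : ℕ, f.IsHomogeneous d) ∧ I = Ideal.span S)
    (hiso : ∀ x ∈ zeroLocus n I, ∀ f ∈ I, ∀ g ∈ I,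
      gradAt n f x ⬝ᵥ (Jmat n).mulVec (gradAt n g x) = 0)
    (U : Set (Fin (2 * n) → ℂ)) (hUZ : U ⊆ zeroLocus n I)
    (hUI : ∀ f : MvPolynomial (Fin (2 * n)) ℂ, (∀ x ∈ U, eval x f = 0) ↔ f ∈ I)
    (hUrank : ∀ x ∈ U, Module.finrank ℂ
      (Submodule.span ℂ {v : Fin (2 * n) → ℂ | ∃ f ∈ I, v = gradAt n f x}) = n)
    (q : Fin (2 * n) → ℂ)
    (hcone : ∀ x ∈ zeroLocus n I, ∀ t : ℂ, x + t • q ∈ zeroLocus n I) :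
    (∑ i : Fin (2 * n), C (((Jmat n).mulVec q) i) * X i) ∈ I ∧
      ∀ x ∈ zeroLocus n I, x ⬝ᵥ (Jmat n).mulVec q = 0 := by
  obtain ⟨S, hShom, rfl⟩ := hhom
  have hω : ∀ x ∈ U, x ⬝ᵥ Jmat n *ᵥ q = 0 := by
    intro x hxU
    have hxZ := hUZ hxU
    have hdim : 2 * Module.finrank ℂ (Submodule.span ℂ {v | ∃ f ∈ Ideal.span S,
        v = gradAt n f x}) = Fintype.card (Fin (2 * n)) := by simp [hUrank x hxU]
    refine dotProduct_mulVec_eq_zero_of_lagrangian (Jmat_mul_self n) ?_ hdim ?_ ?_ <;>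
      simp only [mem_span_gradAt_iff]
    · rintro _ ⟨f, hf, rfl⟩ _ ⟨g, hg, rfl⟩
      exact hiso x hxZ f hf g hg
    · rintro _ ⟨f, hf, rfl⟩
      simpa [gradAt, dotProduct, mul_comm] using hxZ _ (sum_X_mul_pderiv_mem_span hShom hf)
    · rintro _ ⟨f, hf, rfl⟩
      exact sum_pderiv_mul_eq_zero_of_eval_add_smul fun t => hcone x hxZ t f hf
  have hmem : ∑ i, C ((Jmat n *ᵥ q) i) * X i ∈ Ideal.span S :=
    (hUI _).1 fun x hx => by rw [eval_sum_C_mul_X]; exact hω x hx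
  exact ⟨hmem, fun x hx => (eval_sum_C_mul_X _ x).symm.trans (hx _ hmem)⟩

/-- If the zero locus `Z` of a radical homogeneous ideal `I` has isotropic conormal spaces,
the conormal space has dimension `n` on a subset `U` whose vanishing ideal is `I`, and `Z`
is a cone with vertex along a nonzero vector `q`, then the linear form `w ↦ ω(w,q)` lies in
`I`; in particular `Z` lies in the hyperplane `{w : ω(w,q) = 0}` (the variety is degenerate). -/
theorem legendrian_cone_is_degenerate (n : ℕ) (hn : 1 ≤ n)
    (I : Ideal (MvPolynomial (Fin (2 * n)) ℂ)) (hrad : I.IsRadical)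
    (hhom : ∃ S : Set (MvPolynomial (Fin (2 * n)) ℂ),
      (∀ f ∈ S, ∃ d : ℕ, f.IsHomogeneous d) ∧ I = Ideal.span S)
    (hiso : ∀ x ∈ zeroLocus n I, ∀ f ∈ I, ∀ g ∈ I,
      gradAt n f x ⬝ᵥ (Jmat n).mulVec (gradAt n g x) = 0)
    (U : Set (Fin (2 * n) → ℂ)) (hUZ : U ⊆ zeroLocus n I)
    (hUI : ∀ f : MvPolynomial (Fin (2 * n)) ℂ, (∀ x ∈ U, eval x f = 0) ↔ f ∈ I)
    (hUrank : ∀ x ∈ U, Module.finrank ℂ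
      (Submodule.span ℂ {v : Fin (2 * n) → ℂ | ∃ f ∈ I, v = gradAt n f x}) = n)
    (q : Fin (2 * n) → ℂ) (hq : q ≠ 0)
    (hcone : ∀ x ∈ zeroLocus n I, ∀ t : ℂ, x + t • q ∈ zeroLocus n I) :
    (∑ i : Fin (2 * n), C (((Jmat n).mulVec q) i) * X i) ∈ I ∧
      ∀ x ∈ zeroLocus n I, x ⬝ᵥ (Jmat n).mulVec q = 0 :=
  legendrian_cone_is_degenerate_general n I hhom hiso U hUZ hUI hUrank q hcone
end

section
/- Let f ∈ ℂ[y₁,…,y_{n−1}] be a homogeneous polynomial of degree k. For y ∈ ℂ^{n−1} define the vectors in ℂ^{2n}: u(y) = (1, y₁, …, y_{n−1}, (k−2)·f(y), −∂f/∂y₁(y), …, −∂f/∂y_{n−1}(y)) and, for 1 ≤ i ≤ n−1, v_i(y) = ∂u/∂y_i(y) = (0, e_i, (k−2)·∂f/∂y_i(y), −∂²f/∂y₁∂y_i(y), …, −∂²f/∂y_{n−1}∂y_i(y)), where e_i is the i-th standard basis vector of ℂ^{n−1}. Then for all y ∈ ℂ^{n−1} and all i, j: ω(u(y), v_i(y))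 = 0 and ω(v_i(y), v_j(y)) = 0, where ω is the standard symplectic form. (Hence the tangent spaces to the affine cone over the variety X_f parametrized by u are Lagrangian, so X_f is a legendrian subvariety of ℙ^{2n−1}.) -/
open MvPolynomial Matrix

/-- The parametrization of the affine cone over `X_f`:
`u(y) = (1, y₁,…,y_{n−1}, (k−2)f(y), −∂f/∂y₁(y),…,−∂f/∂y_{n−1}(y))`. -/
noncomputable def uvec (n k : ℕ) (f : MvPolynomial (Fin (n - 1)) ℂ)
    (y : Fin (n - 1) → ℂ) : Fin (2 * n) → ℂ :=
  fun j =>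
    if h0 : j.1 = 0 then 1
    else if h1 : j.1 < n then y ⟨j.1 - 1, by omega⟩
    else if h2 : j.1 = n then ((k : ℂ) - 2) * eval y f
    else - eval y (pderiv (⟨j.1 - n - 1, by have := j.isLt; omega⟩ : Fin (n - 1)) f)

/-- The partial derivative `v_i(y) = ∂u/∂y_i(y)`. -/
noncomputable def vvec (n k : ℕ) (f : MvPolynomial (Fin (n - 1)) ℂ) (i : Fin (n - 1))
    (y : Fin (n - 1) → ℂ) : Fin (2 * n) → ℂ :=
  fun j =>
    if h0 : j.1 = 0 then 0
    else if h1 : j.1 < n then (if j.1 - 1 = i.1 then 1 else 0)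
    else if h2 : j.1 = n then ((k : ℂ) - 2) * eval y (pderiv i f)
    else - eval y
      (pderiv (⟨j.1 - n - 1, by have := j.isLt; omega⟩ : Fin (n - 1)) (pderiv i f))

/-!
Write `ω(a, b) = ∑ₚ (aₚ b_{p+n} − a_{p+n} bₚ)` and split off `p = 0`. Then
`ω(u, vᵢ) = (k − 2) ∂ᵢf + ∂ᵢf − ∑ₗ yₗ ∂ₗ∂ᵢf`, which vanishes by Euler's identity for `∂ᵢf`,
homogeneous of degree `k − 1`; and `ω(vᵢ, vⱼ) = ∂ᵢ∂ⱼf − ∂ⱼ∂ᵢf = 0`.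
-/

namespace MvPolynomial

variable {R σ : Type*} [CommRing R]

theorem pderiv_pderiv_comm (i j : σ) (φ : MvPolynomial σ R) :
    pderiv i (pderiv j φ) = pderiv j (pderiv i φ) := by
  have h : ⁅pderiv i, pderiv j⁆ = (0 : Derivation R (MvPolynomial σ R) (MvPolynomial σ R)) :=
    derivation_ext fun l => by
      classical
      rw [Derivation.commutator_apply, pderiv_X, pderiv_X]
      simp only [Pi.single_apply]
      split_ifs <;> simp
  have := congr($h φ)
  rwa [Derivation.commutator_apply, Derivation.zero_apply, sub_eq_zero] at this

variable [Fintype σ] {φ : MvPolynomial σ R} {k : ℕ}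

theorem IsHomogeneous.sum_mul_eval_pderiv (h : φ.IsHomogeneous k) (y : σ → R) :
    ∑ l, y l * eval y (pderiv l φ) = k * eval y φ := by
  simpa using congr(eval y $h.sum_X_mul_pderiv)

theorem IsHomogeneous.sum_mul_eval_pderiv_pderiv (h : φ.IsHomogeneous k) (i : σ) (y : σ → R) :
    ∑ l, y l * eval y (pderiv l (pderiv i φ)) = (k - 1) * eval y (pderiv i φ) := by
  obtain _ | k := k
  · rw [← totalDegree_zero_iff_isHomogeneous, totalDegree_eq_zero_iff_eq_C] at h
    rw [h, pderiv_C]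
    simp
  · rw [h.pderiv.sum_mul_eval_pderiv]
    push_cast
    ring

end MvPolynomial

-- The coordinates `x_p` and `x_{p+n}` paired by `ω`.
def lowIdx {n : ℕ} (p : Fin n) : Fin (2 * n) := ⟨p, by omega⟩

def highIdx {n : ℕ} (p : Fin n) : Fin (2 * n) := ⟨p + n, by omega⟩

@[simp] theorem lowIdx_val {n : ℕ} (p : Fin n) : (lowIdx p : ℕ) = p := rfl

@[simp] theorem highIdx_val {n : ℕ} (p : Fin n) : (highIdx p : ℕ) = p + n := rfl

theorem Jmat_mulVec_lowIdx {n : ℕ} (b : Fin (2 * n) → ℂ) (p : Fin n) :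
    (Jmat n *ᵥ b) (lowIdx p) = b (highIdx p) := by
  refine (Fintype.sum_eq_single (highIdx p) fun q hq => ?_).trans ?_
  · rw [Fin.ne_iff_vne, highIdx_val] at hq
    simp only [Jmat]
    rw [if_neg (by simp; omega), if_neg (by simp; omega), zero_mul]
  · simp [Jmat]

theorem Jmat_mulVec_highIdx {n : ℕ} (b : Fin (2 * n) → ℂ) (p : Fin n) :
    (Jmat n *ᵥ b) (highIdx p) = -b (lowIdx p) := by
  refine (Fintype.sum_eq_single (lowIdx p) fun q hq => ?_).trans ?_
  · rw [Fin.ne_iff_vne, lowIdx_val] at hq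
    simp only [Jmat]
    rw [if_neg (by simp; omega), if_neg (by simp; omega), zero_mul]
  · simp only [Jmat]
    rw [if_neg (by simp; omega), if_pos (by simp), neg_one_mul]

theorem dotProduct_Jmat_mulVec {n : ℕ} (a b : Fin (2 * n) → ℂ) :
    a ⬝ᵥ Jmat n *ᵥ b = ∑ p, (a (lowIdx p) * b (highIdx p) - a (highIdx p) * b (lowIdx p)) := by
  let e : Fin n ⊕ Fin n ≃ Fin (2 * n) := finSumFinEquiv.trans (finCongr (two_mul n).symm)
  have he : ∀ p, e (.inl p) = lowIdx p ∧ e (.inr p) = highIdx p := fun p =>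
    ⟨Fin.ext rfl, Fin.ext (by simp [e, highIdx, add_comm])⟩
  rw [dotProduct, ← e.sum_comp, Fintype.sum_sum_type, Finset.sum_sub_distrib, sub_eq_add_neg,
    ← Finset.sum_neg_distrib]
  simp only [he, Jmat_mulVec_lowIdx, Jmat_mulVec_highIdx, mul_neg]

section Coordinates

variable {m k : ℕ} {f : MvPolynomial (Fin m) ℂ} {y : Fin m → ℂ} {i l : Fin m}

@[simp] theorem uvec_lowIdx_zero : uvec (m + 1) k f y (lowIdx 0) = 1 := rfl

@[simp] theorem uvec_highIdx_zero : uvec (m + 1) k f y (highIdx 0) = (k - 2) * eval y f := by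
  simp [uvec, highIdx]

@[simp] theorem uvec_lowIdx_succ : uvec (m + 1) k f y (lowIdx l.succ) = y l := by
  simp [uvec, lowIdx]

@[simp] theorem uvec_highIdx_succ :
    uvec (m + 1) k f y (highIdx l.succ) = -eval y (pderiv l f) := by
  simp [uvec, highIdx]
  omega

@[simp] theorem vvec_lowIdx_zero : vvec (m + 1) k f i y (lowIdx 0) = 0 := rfl

@[simp] theorem vvec_highIdx_zero :
    vvec (m + 1) k f i y (highIdx 0) = (k - 2) * eval y (pderiv i f) := by
  simp [vvec, highIdx]

@[simp] theorem vvec_lowIdx_succ :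
    vvec (m + 1) k f i y (lowIdx l.succ) = if l = i then 1 else 0 := by
  simp [vvec, lowIdx, Fin.ext_iff]

@[simp] theorem vvec_highIdx_succ :
    vvec (m + 1) k f i y (highIdx l.succ) = -eval y (pderiv l (pderiv i f)) := by
  simp [vvec, highIdx]
  omega

end Coordinates

theorem uvec_dotProduct_Jmat_mulVec_vvec {m k : ℕ} {f : MvPolynomial (Fin m) ℂ}
    (hf : f.IsHomogeneous k) (y : Fin m → ℂ) (i : Fin m) :
    uvec (m + 1) k f y ⬝ᵥ Jmat (m + 1) *ᵥ vvec (m + 1) k f i y = 0 := by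
  simp only [dotProduct_Jmat_mulVec, Fin.sum_univ_succ, uvec_lowIdx_zero, uvec_highIdx_zero,
    uvec_lowIdx_succ, uvec_highIdx_succ, vvec_lowIdx_zero, vvec_highIdx_zero, vvec_lowIdx_succ,
    vvec_highIdx_succ, Finset.sum_sub_distrib, mul_neg, mul_ite, mul_one, mul_zero,
    Finset.sum_ite_eq', Finset.mem_univ, if_true, Finset.sum_neg_distrib]
  linear_combination -hf.sum_mul_eval_pderiv_pderiv i y

theorem vvec_dotProduct_Jmat_mulVec_vvec {m : ℕ} (k : ℕ) (f : MvPolynomial (Fin m) ℂ)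
    (y : Fin m → ℂ) (i j : Fin m) :
    vvec (m + 1) k f i y ⬝ᵥ Jmat (m + 1) *ᵥ vvec (m + 1) k f j y = 0 := by
  simp only [dotProduct_Jmat_mulVec, Fin.sum_univ_succ, vvec_lowIdx_zero, vvec_highIdx_zero,
    vvec_lowIdx_succ, vvec_highIdx_succ, Finset.sum_sub_distrib, mul_neg, mul_ite, ite_mul,
    mul_one, one_mul, mul_zero, zero_mul, Finset.sum_ite_eq', Finset.mem_univ, if_true,
    Finset.sum_neg_distrib]
  linear_combination congr(eval y $(pderiv_pderiv_comm j i f))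

theorem Xf_is_legendrian_general (n : ℕ) (k : ℕ)
    (f : MvPolynomial (Fin (n - 1)) ℂ) (hf : f.IsHomogeneous k) :
    ∀ (y : Fin (n - 1) → ℂ) (i j : Fin (n - 1)),
      uvec n k f y ⬝ᵥ (Jmat n).mulVec (vvec n k f i y) = 0 ∧
      vvec n k f i y ⬝ᵥ (Jmat n).mulVec (vvec n k f j y) = 0 := by
  intro y i j
  obtain _ | m := n
  · exact i.elim0
  exact ⟨uvec_dotProduct_Jmat_mulVec_vvec hf y i, vvec_dotProduct_Jmat_mulVec_vvec k f y i j⟩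

/-- For a homogeneous polynomial `f` of degree `k` in `n−1` variables, the tangent vectors
`u(y)` and `v_i(y)` to the affine cone over `X_f` pair to zero under the standard symplectic
form: hence the cone's tangent spaces are Lagrangian and `X_f ⊆ ℙ^{2n−1}` is legendrian. -/
theorem Xf_is_legendrian (n : ℕ) (hn : 2 ≤ n) (k : ℕ)
    (f : MvPolynomial (Fin (n - 1)) ℂ) (hf : f.IsHomogeneous k) :
    ∀ (y : Fin (n - 1) → ℂ) (i j : Fin (n - 1)),
      uvec n k f y ⬝ᵥ (Jmat n).mulVec (vvec n k f i y) = 0 ∧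
      vvec n k f i y ⬝ᵥ (Jmat n).mulVec (vvec n k f j y) = 0 :=
  Xf_is_legendrian_general n k f hf
end

section
/- Let ω be the alternating bilinear form on ℂ⁴ given by the matrix ((0,0,0,−1),(0,0,3,0),(0,−3,0,0),(1,0,0,0)). For (λ,μ) ∈ ℂ² set v₁ = (3λ², 2λμ, μ², 0) and v₂ = (0, λ², 2λμ, 3μ²) (the tangent vectors to the affine cone over the twisted cubic (λ³ : λ²μ : λμ² : μ³) at the point corresponding to (λ,μ)). Then: (1) ω(v₁, v₂) = 0 for all (λ,μ) ∈ ℂ², so the twisted cubic is a legendrian curve in ℙ³; and (2) if ω̃ is any bilinear skew-symmetric form on ℂ⁴ with ω̃(v₁, v₂) = 0 for all (λ,μ) ∈ ℂ² \ {0}, then ω̃ is a scalar multiple of ω. -/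
open Matrix

/-- The symplectic form making the twisted cubic legendrian. -/
def omegaCubic : Matrix (Fin 4) (Fin 4) ℂ :=
  Matrix.of ![![0, 0, 0, -1], ![0, 0, 3, 0], ![0, -3, 0, 0], ![1, 0, 0, 0]]

/-- (1) The tangent planes to the cone over the twisted cubic are Lagrangian for
`omegaCubic`, so the twisted cubic is a legendrian curve in `ℙ³`; (2) any skew-symmetric
bilinear form vanishing on these tangent planes is a scalar multiple of `omegaCubic`. -/
theorem twisted_cubic_legendrian_and_unique_form :
    (∀ l m : ℂ,
      (![3 * l ^ 2, 2 * l * m, m ^ 2, 0] ⬝ᵥ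
        omegaCubic.mulVec ![0, l ^ 2, 2 * l * m, 3 * m ^ 2]) = 0) ∧
    (∀ M : Matrix (Fin 4) (Fin 4) ℂ, Mᵀ = -M →
      (∀ l m : ℂ, (l, m) ≠ (0, 0) →
        (![3 * l ^ 2, 2 * l * m, m ^ 2, 0] ⬝ᵥ
          M.mulVec ![0, l ^ 2, 2 * l * m, 3 * m ^ 2]) = 0) →
      ∃ c : ℂ, M = c • omegaCubic) := by
  constructor
  · intro l m
    simp [omegaCubic, Matrix.mulVec, dotProduct, Fin.sum_univ_four,
      Matrix.vecHead, Matrix.vecTail]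
    ring
  · intro M hM h
    have skew : ∀ i j : Fin 4, M i j = - M j i := fun i j => by
      have := congrFun (congrFun hM j) i
      simpa using this
    have h10 := h 1 0 (by simp)
    have h01 := h 0 1 (by simp)
    have h11 := h 1 1 (by simp)
    have h1m1 := h 1 (-1) (by simp)
    have h12 := h 1 2 (by simp)
    simp [Matrix.mulVec, dotProduct, Fin.sum_univ_four] at h10 h01 h11 h1m1 h12
    have d11 : M 1 1 = 0 := by linear_combination (skew 1 1) / 2
    have d22 : M 2 2 = 0 := by linear_combination (skew 2 2) / 2
    have s12 := skew 2 1
    rw [h10, h01, d11, d22, s12] at h11 h1m1 h12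
    have ee : M 1 3 = 0 := by linear_combination h12/36 - h11/12 - h1m1/36
    have eb : M 0 2 = 0 := by linear_combination h11/12 - h1m1/12 - ee
    have ed : M 1 2 = -3 * M 0 3 := by linear_combination (h11 + h1m1)/6
    refine ⟨-M 0 3, ?_⟩
    ext i j
    fin_cases i <;> fin_cases j <;> simp [omegaCubic, Matrix.smul_apply, Matrix.vecHead, Matrix.vecTail]
    · linear_combination (skew 0 0) / 2
    · exact h10
    · exact eb
    · linear_combination skew 1 0 - h10
    · exact d11
    · linear_combination ed
    · exact ee
    · linear_combination skew 2 0 - eb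
    · linear_combination skew 2 1 - ed
    · exact d22
    · exact h01
    · linear_combination skew 3 0
    · linear_combination skew 3 1 - ee
    · linear_combination skew 3 2 - h01
    · linear_combination (skew 3 3) / 2
end

section
/- In the polynomial ring ℂ[u₀, u₁, u₂, v₀, v₁, v₂] with Poisson bracket [f,g] = Σ_{k=0}^{2} ((∂f/∂u_k)(∂g/∂v_k) − (∂f/∂v_k)(∂g/∂u_k)), the three polynomials p₁ = u₀v₀ − u₁v₁, p₂ = u₀v₀ − u₂v₂, and p₃ = u₀u₁u₂ − v₀v₁v₂ satisfy [p_i, p_j] = 0 for all i, j ∈ {1,2,3}. Consequently the ideal (p₁, p₂, p₃) is closed under the Poisson bracket, so the surface it defines in ℙ⁵ is a legendrian variety which is a complete intersection (it is singular in codimension 1). -/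
open MvPolynomial

/-- The Poisson bracket on `ℂ[u₀,u₁,u₂,v₀,v₁,v₂]` (variables `u_k = X k`, `v_k = X (k+3)`):
`[f,g] = Σ_{k=0}^{2} (∂f/∂u_k · ∂g/∂v_k − ∂f/∂v_k · ∂g/∂u_k)`. -/
noncomputable def poissonBracket6 (f g : MvPolynomial (Fin 6) ℂ) : MvPolynomial (Fin 6) ℂ :=
  (pderiv 0 f * pderiv 3 g - pderiv 3 f * pderiv 0 g) +
    (pderiv 1 f * pderiv 4 g - pderiv 4 f * pderiv 1 g) +
    (pderiv 2 f * pderiv 5 g - pderiv 5 f * pderiv 2 g)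

/-- `p₁ = u₀v₀ − u₁v₁`. -/
noncomputable def p₁ : MvPolynomial (Fin 6) ℂ := X 0 * X 3 - X 1 * X 4

/-- `p₂ = u₀v₀ − u₂v₂`. -/
noncomputable def p₂ : MvPolynomial (Fin 6) ℂ := X 0 * X 3 - X 2 * X 5

/-- `p₃ = u₀u₁u₂ − v₀v₁v₂`. -/
noncomputable def p₃ : MvPolynomial (Fin 6) ℂ := X 0 * X 1 * X 2 - X 3 * X 4 * X 5

lemma pb_antisymm (f g : MvPolynomial (Fin 6) ℂ) :
    poissonBracket6 f g = -poissonBracket6 g f := by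
  simp only [poissonBracket6]; ring

lemma pb_zero_right (f : MvPolynomial (Fin 6) ℂ) : poissonBracket6 f 0 = 0 := by
  simp [poissonBracket6]

lemma pb_add_right (f g h : MvPolynomial (Fin 6) ℂ) :
    poissonBracket6 f (g + h) = poissonBracket6 f g + poissonBracket6 f h := by
  simp only [poissonBracket6, map_add]; ring

lemma pb_mul_right (f a g : MvPolynomial (Fin 6) ℂ) :
    poissonBracket6 f (a * g) = a * poissonBracket6 f g + g * poissonBracket6 f a := by
  simp only [poissonBracket6, pderiv_mul]; ring

lemma pb_add_left (f g h : MvPolynomial (Fin 6) ℂ) :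
    poissonBracket6 (f + g) h = poissonBracket6 f h + poissonBracket6 g h := by
  simp only [poissonBracket6, map_add]; ring

lemma pb_mul_left (a f h : MvPolynomial (Fin 6) ℂ) :
    poissonBracket6 (a * f) h = a * poissonBracket6 f h + f * poissonBracket6 a h := by
  simp only [poissonBracket6, pderiv_mul]; ring

/-- The three equations of the legendrian complete-intersection surface have pairwise
vanishing Poisson brackets; consequently the ideal `(p₁, p₂, p₃)` is closed under the
Poisson bracket. -/
theorem complete_intersection_brackets_vanish :
    (∀ p ∈ ({p₁, p₂, p₃} : Set (MvPolynomial (Fin 6) ℂ)),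
      ∀ q ∈ ({p₁, p₂, p₃} : Set (MvPolynomial (Fin 6) ℂ)), poissonBracket6 p q = 0) ∧
    (∀ p ∈ Ideal.span ({p₁, p₂, p₃} : Set (MvPolynomial (Fin 6) ℂ)),
      ∀ q ∈ Ideal.span ({p₁, p₂, p₃} : Set (MvPolynomial (Fin 6) ℂ)),
        poissonBracket6 p q ∈ Ideal.span ({p₁, p₂, p₃} : Set (MvPolynomial (Fin 6) ℂ))) := by
  have h12 : poissonBracket6 p₁ p₂ = 0 := by
    simp [poissonBracket6, p₁, p₂, pderiv_X, Pi.single_apply]; ring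
  have h13 : poissonBracket6 p₁ p₃ = 0 := by
    simp [poissonBracket6, p₁, p₃, pderiv_X, Pi.single_apply]; ring
  have h23 : poissonBracket6 p₂ p₃ = 0 := by
    simp [poissonBracket6, p₂, p₃, pderiv_X, Pi.single_apply]; ring
  have hself : ∀ f : MvPolynomial (Fin 6) ℂ, poissonBracket6 f f = 0 := by
    intro f
    have h2 : (2 : MvPolynomial (Fin 6) ℂ) * poissonBracket6 f f = 0 := by
      linear_combination pb_antisymm f f
    rcases mul_eq_zero.mp h2 with h | h
    · exact absurd h (by norm_num)
    · exact h
  have h21 : poissonBracket6 p₂ p₁ = 0 := by rw [pb_antisymm, h12, neg_zero]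
  have h31 : poissonBracket6 p₃ p₁ = 0 := by rw [pb_antisymm, h13, neg_zero]
  have h32 : poissonBracket6 p₃ p₂ = 0 := by rw [pb_antisymm, h23, neg_zero]
  have hgen : ∀ p ∈ ({p₁, p₂, p₃} : Set (MvPolynomial (Fin 6) ℂ)),
      ∀ q ∈ ({p₁, p₂, p₃} : Set (MvPolynomial (Fin 6) ℂ)), poissonBracket6 p q = 0 := by
    rintro p (rfl | rfl | rfl) q (rfl | rfl | rfl)
    exacts [hself p₁, h12, h13, h21, hself p₂, h23, h31, h32, hself p₃]
  refine ⟨hgen, ?_⟩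
  set S : Set (MvPolynomial (Fin 6) ℂ) := {p₁, p₂, p₃} with hS
  set I := Ideal.span S with hI
  -- step 1: bracket of a generator with anything in `I` lies in `I`
  have key : ∀ g ∈ S, ∀ q ∈ I, poissonBracket6 g q ∈ I := by
    intro g hg q hq
    induction hq using Submodule.span_induction with
    | mem x hx => rw [hgen g hg x hx]; exact I.zero_mem
    | zero => rw [pb_zero_right]; exact I.zero_mem
    | add x y hx hy ihx ihy => rw [pb_add_right]; exact I.add_mem ihx ihy
    | smul a x hx ihx =>
        rw [smul_eq_mul, pb_mul_right]
        exact I.add_mem (I.mul_mem_left a ihx) (I.mul_mem_right _ hx)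
  -- step 2: bracket of anything in `I` with anything in `I` lies in `I`
  intro p hp q hq
  induction hp using Submodule.span_induction with
  | mem x hx => exact key x hx q hq
  | zero =>
      rw [pb_antisymm, pb_zero_right, neg_zero]; exact I.zero_mem
  | add x y hx hy ihx ihy => rw [pb_add_left]; exact I.add_mem ihx ihy
  | smul a x hx ihx =>
      rw [smul_eq_mul, pb_mul_left]
      exact I.add_mem (I.mul_mem_left a ihx) (I.mul_mem_right _ hx)
end

section
/- Let E be a real inner product space and Φ ⊆ E a finite set such that for all β, γ ∈ Φ with ⟨β,γ⟩ < 0 and β + γ ≠ 0 one has β + γ ∈ Φ. Suppose Φ is partitioned into disjoint subsets P and N such that: (a) any two elements of N have non-negative inner product; (b) whenever β, γ ∈ P and β + γ ∈ Φ, then β + γ ∈ P. Let k ≥ 1 and let α₀, α₁, …, α_k ∈ Φ be such that α₀ ∈ N, α_k ∈ N, α₁, …, α_{k−1} ∈ P, −α_i ∈ P for 1 ≤ i ≤ k−1, there is a linear functional ℓ on E with ℓ(α_i) > 0 for all i, and ⟨α_i, α_{i+1}⟩ < 0 for 0 ≤ i ≤ k−1 while ⟨α_i, α_j⟩ = 0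 whenever |i − j| ≥ 2. Then a contradiction follows (no such configuration exists). (This is the combinatorial content of the statement that for a simple Lie algebra, if all pairwise angles between the roots of the nilpotent part 𝔫 of a parabolic decomposition are acute or right, then only one simple root belongs to the roots of 𝔫.) -/
open scoped RealInnerProductSpace

/-- Combinatorial content of: for a simple Lie algebra with a parabolic decomposition
`𝔤 = 𝔭 ⊕ 𝔫`, if all pairwise angles between the roots of `𝔫` are acute or right, then only
one simple root belongs to the roots of `𝔫`.  No string of "simple roots" in `Φ` can join
two elements of `N` through elements of `P`. -/
theorem no_string_joining_two_roots_of_n (E : Type*) [NormedAddCommGroup E]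
    [InnerProductSpace ℝ E] [DecidableEq E]
    (Φ : Finset E)
    (hroot : ∀ β ∈ Φ, ∀ γ ∈ Φ, ⟪β, γ⟫ < 0 → β + γ ≠ 0 → β + γ ∈ Φ)
    (P N : Finset E) (hunion : P ∪ N = Φ) (hdisj : Disjoint P N)
    (ha : ∀ β ∈ N, ∀ γ ∈ N, 0 ≤ ⟪β, γ⟫)
    (hb : ∀ β ∈ P, ∀ γ ∈ P, β + γ ∈ Φ → β + γ ∈ P)
    (k : ℕ) (hk : 1 ≤ k) (α : ℕ → E)
    (hmem : ∀ i ≤ k, α i ∈ Φ)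
    (h0 : α 0 ∈ N) (hkN : α k ∈ N)
    (hP : ∀ i, 1 ≤ i → i ≤ k - 1 → α i ∈ P)
    (hnegP : ∀ i, 1 ≤ i → i ≤ k - 1 → -α i ∈ P)
    (ℓ : E →ₗ[ℝ] ℝ) (hl : ∀ i ≤ k, 0 < ℓ (α i))
    (hadj : ∀ i, i ≤ k - 1 → ⟪α i, α (i + 1)⟫ < 0)
    (horth : ∀ i j, i ≤ k → j ≤ k → (i + 2 ≤ j ∨ j + 2 ≤ i) → ⟪α i, α j⟫ = 0) :
    False := by
  have hNsub : ∀ x ∈ N, x ∈ Φ := fun x hx => hunion ▸ Finset.mem_union_right _ hx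
  set S : ℕ → E := fun m => ∑ i ∈ Finset.range (m + 1), α i with hS
  have hSl : ∀ m ≤ k, 0 < ℓ (S m) := by
    intro m hm
    have h1 : ℓ (S m) = ∑ i ∈ Finset.range (m + 1), ℓ (α i) := map_sum ℓ _ _
    rw [h1]
    apply Finset.sum_pos
    · intro i hi
      exact hl i (le_trans (Nat.lt_succ_iff.mp (Finset.mem_range.mp hi)) hm)
    · exact Finset.nonempty_range_add_one
  have hinner : ∀ m, m + 1 ≤ k → ⟪S m, α (m + 1)⟫ = ⟪α m, α (m + 1)⟫ := by
    intro m hm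
    rw [hS]
    simp only
    rw [sum_inner]
    rw [Finset.sum_eq_single m]
    · intro i hi hne
      have hi' : i < m + 1 := Finset.mem_range.mp hi
      exact horth i (m + 1) (by omega) hm (Or.inl (by omega))
    · intro h; exact absurd (Finset.self_mem_range_succ m) h
  have key : ∀ m, m ≤ k - 1 → S m ∈ N := by
    intro m
    induction m with
    | zero => intro _; simpa [hS] using h0
    | succ n ih =>
      intro hm
      have hSN := ih (by omega)
      have hSΦ := hNsub _ hSN
      have hm1k : n + 1 ≤ k := by omega
      have hEq : S (n + 1) = S n + α (n + 1) := by
        simp [hS, Finset.sum_range_succ]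
      have hneg : ⟪S n, α (n + 1)⟫ < 0 := by
        rw [hinner n hm1k]; exact hadj n (by omega)
      have hsum_ne : S n + α (n + 1) ≠ 0 := by
        intro h
        have h2 := hSl (n + 1) hm1k
        rw [hEq, h] at h2
        simp at h2
      have hΦ : S n + α (n + 1) ∈ Φ := hroot _ hSΦ _ (hmem _ hm1k) hneg hsum_ne
      rw [hEq]
      by_contra hnot
      have hPmem : S n + α (n + 1) ∈ P := by
        rw [← hunion] at hΦ
        rcases Finset.mem_union.mp hΦ with h | h
        · exact h
        · exact absurd h hnot
      have hnegmem : -α (n + 1) ∈ P := hnegP (n + 1) (by omega) hm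
      have hSP : S n ∈ P := by
        have h3 := hb _ hPmem _ hnegmem (by simpa using hSΦ)
        simpa using h3
      exact (Finset.disjoint_left.mp hdisj hSP) hSN
  have hfin := key (k - 1) le_rfl
  have hk1 : k - 1 + 1 = k := Nat.sub_add_cancel hk
  have hip : ⟪S (k - 1), α k⟫ < 0 := by
    have h4 := hinner (k - 1) (by omega)
    rw [hk1] at h4
    rw [h4]
    have h5 := hadj (k - 1) (by omega)
    rwa [hk1] at h5
  exact absurd (ha _ hfin _ hkN) (not_le.mpr hip)
end
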